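/- Let n ≥ 1 and let O : Fin n → ℝ² be an observation with S(O) = Σ_j O j ≠ 0 and ū(O) = S(O)/‖S(O)‖. Define the preprocessing transformation T_pre(O) : Fin n → ℝ² by T_pre(O) j = Rot(ū(O))ᵀ ⬝ (O j). Then T_pre is invariant under rotations of the observation: for every planar rotation matrix R(θ), T_pre(j ↦ R(θ) ⬝ O j) = T_pre(O). -/

import Mathlib

open Matrix

/-- The planar rotation matrix `R(θ)`. -/
noncomputable def Rmat (θ : ℝ) : Matrix (Fin 2) (Fin 2) ℝ :=
  !![Real.cos θ, -Real.sin θ; Real.sin θ, Real.cos θ]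

/-- For a unit vector `u = (u₁, u₂) ∈ ℝ²`, the rotation matrix
`Rot(u) = ![![u₁, −u₂], ![u₂, u₁]]` sending `e₁ = (1,0)` to `u`. -/
def Rot (u : Fin 2 → ℝ) : Matrix (Fin 2) (Fin 2) ℝ :=
  !![u 0, -(u 1); u 1, u 0]

/-- A `2 × 2` matrix acting on a vector of the Euclidean plane
by matrix–vector multiplication. -/
noncomputable def mvE (M : Matrix (Fin 2) (Fin 2) ℝ) (v : EuclideanSpace ℝ (Fin 2)) :
    EuclideanSpace ℝ (Fin 2) :=
  WithLp.toLp 2 (M.mulVec v)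

/-- The sum `S(O) = Σ_j O j` of an observation. -/
noncomputable def obsSum {n : ℕ} (O : Fin n → EuclideanSpace ℝ (Fin 2)) :
    EuclideanSpace ℝ (Fin 2) :=
  ∑ j, O j

/-- The normalized sum `ū(O) = S(O)/‖S(O)‖` of an observation. -/
noncomputable def ubar {n : ℕ} (O : Fin n → EuclideanSpace ℝ (Fin 2)) :
    EuclideanSpace ℝ (Fin 2) :=
  ‖obsSum O‖⁻¹ • obsSum O

/-- The preprocessing transformation `T_pre(O) j = Rot(ū(O))ᵀ ⬝ (O j)`. -/
noncomputable def Tpre {n : ℕ} (O : Fin n → EuclideanSpace ℝ (Fin 2)) :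
    Fin n → EuclideanSpace ℝ (Fin 2) :=
  fun j => mvE (Rot (ubar O))ᵀ (O j)

/-! `Rot` is complex multiplication on `ℝ² ≅ ℂ`, and `R(θ) = Rot(cos θ, sin θ)` is multiplication
by the unit number `e^{iθ}`. Rotating the observation therefore rotates its sum and, since
rotations are isometries, its normalized sum: `ū(R(θ) O) = R(θ) ū(O)`. Hence
`Rot(ū(R(θ) O)) = R(θ) Rot(ū(O))`, and the extra factor `R(θ)ᵀ` in `T_pre` cancels the rotation
of each `O j` because `R(θ)ᵀ R(θ) = 1`. -/

lemma Rmat_eq_Rot (θ : ℝ) : Rmat θ = Rot !₂[Real.cos θ, Real.sin θ] := by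
  ext i j; fin_cases i <;> fin_cases j <;> simp [Rmat, Rot]

lemma Rot_mvE_Rot (v : Fin 2 → ℝ) (u : EuclideanSpace ℝ (Fin 2)) :
    Rot (mvE (Rot v) u) = Rot v * Rot u := by
  ext i j
  fin_cases i <;> fin_cases j <;>
    simp [Rot, mvE, dotProduct, mul_apply, Fin.sum_univ_two]; ring

lemma Rot_transpose_mul_self (v : Fin 2 → ℝ) : (Rot v)ᵀ * Rot v = (v 0 ^ 2 + v 1 ^ 2) • 1 := by
  ext i j
  fin_cases i <;> fin_cases j <;>
    simp [Rot, mul_apply, Fin.sum_univ_two] <;> ring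

lemma mvE_mul (A B : Matrix (Fin 2) (Fin 2) ℝ) (v : EuclideanSpace ℝ (Fin 2)) :
    mvE (A * B) v = mvE A (mvE B v) := by
  simp only [mvE, WithLp.ofLp_toLp, mulVec_mulVec]

lemma mvE_smul (M : Matrix (Fin 2) (Fin 2) ℝ) (c : ℝ) (v : EuclideanSpace ℝ (Fin 2)) :
    mvE M (c • v) = c • mvE M v := by
  simp only [mvE, WithLp.ofLp_smul, mulVec_smul, WithLp.toLp_smul]

lemma obsSum_mvE {n : ℕ} (M : Matrix (Fin 2) (Fin 2) ℝ) (O : Fin n → EuclideanSpace ℝ (Fin 2)) :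
    obsSum (fun j => mvE M (O j)) = mvE M (obsSum O) := by
  simp only [obsSum, mvE, WithLp.ofLp_sum, mulVec_sum, WithLp.toLp_sum]

lemma norm_sq_fin_two (v : EuclideanSpace ℝ (Fin 2)) : ‖v‖ ^ 2 = v 0 ^ 2 + v 1 ^ 2 := by
  simp [EuclideanSpace.real_norm_sq_eq, Fin.sum_univ_two]

lemma norm_mvE_Rot (v u : EuclideanSpace ℝ (Fin 2)) : ‖mvE (Rot v) u‖ = ‖v‖ * ‖u‖ := by
  have key : ‖mvE (Rot v) u‖ ^ 2 = (‖v‖ * ‖u‖) ^ 2 := by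
    rw [mul_pow, norm_sq_fin_two, norm_sq_fin_two, norm_sq_fin_two]
    simp [mvE, Rot, dotProduct, Fin.sum_univ_two]
    ring
  exact (pow_left_inj₀ (norm_nonneg _) (by positivity) two_ne_zero).mp key

section

variable {n : ℕ} (O : Fin n → EuclideanSpace ℝ (Fin 2)) {v : EuclideanSpace ℝ (Fin 2)}

lemma ubar_mvE_Rot (hv : ‖v‖ = 1) :
    ubar (fun j => mvE (Rot v) (O j)) = mvE (Rot v) (ubar O) := by
  simp only [ubar, obsSum_mvE, norm_mvE_Rot, hv, one_mul, mvE_smul]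

theorem Tpre_mvE_Rot (hv : ‖v‖ = 1) : Tpre (fun j => mvE (Rot v) (O j)) = Tpre O := by
  have horth : (Rot v)ᵀ * Rot v = 1 := by
    rw [Rot_transpose_mul_self, ← norm_sq_fin_two, hv, one_pow, one_smul]
  funext j
  simp only [Tpre, ubar_mvE_Rot O hv]
  rw [Rot_mvE_Rot, transpose_mul, mvE_mul, ← mvE_mul _ (Rot v), horth]
  simp only [mvE, one_mulVec, WithLp.toLp_ofLp]

end

lemma norm_cos_sin (θ : ℝ) : ‖!₂[Real.cos θ, Real.sin θ]‖ = 1 := by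
  rw [← pow_eq_one_iff_of_nonneg (norm_nonneg _) two_ne_zero, norm_sq_fin_two]
  simp

theorem stmt4_general (n : ℕ) (O : Fin n → EuclideanSpace ℝ (Fin 2)) (θ : ℝ) :
    Tpre (fun j => mvE (Rmat θ) (O j)) = Tpre O := by
  rw [Rmat_eq_Rot]
  exact Tpre_mvE_Rot O (norm_cos_sin θ)

/-- For an observation with nonzero sum, the preprocessing transformation `T_pre`
is invariant under rotations of the observation: for every planar rotation matrix
`R(θ)`, `T_pre(j ↦ R(θ) ⬝ O j) = T_pre(O)`. -/
theorem stmt4 (n : ℕ) (hn : 1 ≤ n) (O : Fin n → EuclideanSpace ℝ (Fin 2))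
    (hS : obsSum O ≠ 0) (θ : ℝ) :
    Tpre (fun j => mvE (Rmat θ) (O j)) = Tpre O :=
  stmt4_general n O θ
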